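/- arXiv:1108.1880 — 2 statements merged into one kernel-verified Lean document; each statement's English description precedes it below -/
import Mathlib

section
/- Let α: U → V be a surjective transmission between supertropical monoids that is injective on (eU) \ {0}. If U is a semiring, then V is a semiring. -/
universe u v w

class STM (U : Type u) extends CommMonoid U, Zero U where
  zero_mul' : ∀ x : U, 0 * x = 0
  e : U
  e_idem : e * e = e
  ghost_zero : ∀ x : U, e * x = 0 → x = 0
  le : U → U → Prop
  le_refl : ∀ x : U, le x x
  le_trans : ∀ x y z : U, le x y → le y z → le x z
  le_total : ∀ x y : U, le x y ∨ le y x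
  le_antisymm : ∀ x y : U, e * x = x → e * y = y → le x y → le y x → x = y
  le_e : ∀ x y : U, le x y ↔ le (e * x) (e * y)
  mul_le_mul : ∀ x y z : U, le x y → le (x * z) (y * z)
  zero_le : ∀ x : U, le 0 x

namespace STM

variable {U : Type u} [STM U]

/-- `x` is a ghost element, i.e. `x ∈ eU`. -/
def Ghost (x : U) : Prop := e * x = x

/-- strict inequality for the ordering of the ghost ideal -/
def slt (x y : U) : Prop := le x y ∧ ¬ le y x

open scoped Classical in
/-- the forced addition on a supertropical monoid -/
noncomputable def add (x y : U) : U :=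
  if slt (e * x) (e * y) then y
  else if slt (e * y) (e * x) then x
  else e * x

/-- the supertropical monoid `U` "is" a (supertropical) semiring: the forced
addition is associative and distributive. -/
def IsSemiring (U : Type u) [STM U] : Prop :=
  (∀ x y z : U, add (add x y) z = add x (add y z)) ∧
  (∀ x y z : U, add x y * z = add (x * z) (y * z))

end STM

open STM

/-- A transmission between supertropical monoids. -/
structure IsTransmission {U : Type u} {V : Type v} [STM U] [STM V] (α : U → V) : Prop where
  map_zero : α 0 = 0
  map_one : α 1 = 1
  map_mul : ∀ x y : U, α (x * y) = α x * α y
  map_e : α (STM.e : U) = (STM.e : V)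
  mono : ∀ x y : U, Ghost x → Ghost y → STM.le x y → STM.le (α x) (α y)

/-!
A transmission that is injective on the nonzero ghosts preserves strict inequalities between
ghosts, except when both sides collapse to `0`; hence it carries the forced addition of `U` to
that of `V`. Being surjective and multiplicative as well, it then transports associativity and
distributivity from `U` to `V`.
-/

namespace STM

variable {U : Type u} [STM U]

lemma Ghost.zero : Ghost (0 : U) := by
  rw [Ghost, mul_comm]
  exact zero_mul' _

lemma ghost_e_mul (x : U) : Ghost (e * x) := by
  rw [Ghost, ← mul_assoc, e_idem]

lemma slt_irrefl (a : U) : ¬ slt a a := fun h => h.2 (STM.le_refl a)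

lemma slt_asymm {a b : U} (h : slt a b) : ¬ slt b a := fun h' => h.2 h'.1

lemma slt_trichotomy {a b : U} (ha : Ghost a) (hb : Ghost b) :
    slt a b ∨ a = b ∨ slt b a := by
  by_cases hab : STM.le a b <;> by_cases hba : STM.le b a
  · exact Or.inr (Or.inl (STM.le_antisymm a b ha hb hab hba))
  · exact Or.inl ⟨hab, hba⟩
  · exact Or.inr (Or.inr ⟨hba, hab⟩)
  · exact (hab ((STM.le_total a b).resolve_right hba)).elim

lemma add_of_slt {x y : U} (h : slt (e * x) (e * y)) : add x y = y := by
  rw [add, if_pos h]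

lemma add_of_e_mul_eq {x y : U} (h : e * x = e * y) : add x y = e * x := by
  rw [add, h, if_neg (slt_irrefl _), if_neg (slt_irrefl _)]

lemma add_comm (x y : U) : add x y = add y x := by
  rcases slt_trichotomy (ghost_e_mul x) (ghost_e_mul y) with h | h | h
  · rw [add_of_slt h, add, if_neg (slt_asymm h), if_pos h]
  · rw [add_of_e_mul_eq h, add_of_e_mul_eq h.symm, h]
  · rw [add_of_slt h, add, if_neg (slt_asymm h), if_pos h]

lemma add_zero_zero : add (0 : U) 0 = 0 := by
  rw [add_of_e_mul_eq rfl]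
  exact Ghost.zero

lemma IsSemiring.of_surjective {V : Type v} [STM V] (hU : IsSemiring U) (f : U → V)
    (hsurj : Function.Surjective f) (map_mul : ∀ x y, f (x * y) = f x * f y)
    (map_add : ∀ x y, f (add x y) = add (f x) (f y)) : IsSemiring V := by
  constructor
  · intro a b c
    obtain ⟨x, rfl⟩ := hsurj a
    obtain ⟨y, rfl⟩ := hsurj b
    obtain ⟨z, rfl⟩ := hsurj c
    rw [← map_add, ← map_add, ← map_add, ← map_add, hU.1]
  · intro a b c
    obtain ⟨x, rfl⟩ := hsurj a
    obtain ⟨y, rfl⟩ := hsurj b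
    obtain ⟨z, rfl⟩ := hsurj c
    rw [← map_add, ← map_mul, hU.2, map_add, map_mul, map_mul]

end STM

def InjOnNonzeroGhosts {U : Type u} {V : Type v} [STM U] [STM V] (α : U → V) : Prop :=
  ∀ x y : U, Ghost x → Ghost y → x ≠ 0 → y ≠ 0 → α x = α y → x = y

namespace IsTransmission

variable {U : Type u} {V : Type v} [STM U] [STM V] {α : U → V}

lemma map_e_mul (hα : IsTransmission α) (x : U) : α (e * x) = e * α x := by
  rw [hα.map_mul, hα.map_e]

lemma ghost_map (hα : IsTransmission α) {a : U} (ha : Ghost a) : Ghost (α a) := by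
  rw [← ha, hα.map_e_mul]
  exact ghost_e_mul _

lemma eq_zero_of_map_e_mul_eq_zero (hα : IsTransmission α) {x : U} (h : α (e * x) = 0) :
    α x = 0 :=
  STM.ghost_zero _ (hα.map_e_mul x ▸ h)

lemma slt_or_eq_zero (hα : IsTransmission α) (hinj : InjOnNonzeroGhosts α) {a b : U}
    (ha : Ghost a) (hb : Ghost b) (h : slt a b) :
    slt (α a) (α b) ∨ (α a = 0 ∧ α b = 0) := by
  have hle : STM.le (α a) (α b) := hα.mono a b ha hb h.1
  by_cases hba : STM.le (α b) (α a)
  · have heq : α a = α b := STM.le_antisymm _ _ (hα.ghost_map ha) (hα.ghost_map hb) hle hba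
    have hb0 : b ≠ 0 := by
      rintro rfl
      exact h.2 (STM.zero_le a)
    by_cases ha0 : a = 0
    · subst ha0
      exact Or.inr ⟨hα.map_zero, heq ▸ hα.map_zero⟩
    · exact absurd (hinj a b ha hb ha0 hb0 heq ▸ h) (slt_irrefl b)
  · exact Or.inl ⟨hle, hba⟩

lemma map_add_of_slt (hα : IsTransmission α) (hinj : InjOnNonzeroGhosts α) {x y : U}
    (h : slt (e * x) (e * y)) :
    α (add x y) = add (α x) (α y) := by
  rw [add_of_slt h]
  rcases hα.slt_or_eq_zero hinj (ghost_e_mul x) (ghost_e_mul y) h with hs | ⟨hx, hy⟩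
  · rw [hα.map_e_mul, hα.map_e_mul] at hs
    rw [add_of_slt hs]
  · rw [hα.eq_zero_of_map_e_mul_eq_zero hx, hα.eq_zero_of_map_e_mul_eq_zero hy, add_zero_zero]

lemma map_add (hα : IsTransmission α) (hinj : InjOnNonzeroGhosts α) (x y : U) :
    α (add x y) = add (α x) (α y) := by
  rcases slt_trichotomy (ghost_e_mul x) (ghost_e_mul y) with h | h | h
  · exact hα.map_add_of_slt hinj h
  · have hV : e * α x = e * α y := by rw [← hα.map_e_mul, ← hα.map_e_mul, h]
    rw [add_of_e_mul_eq h, add_of_e_mul_eq hV, hα.map_e_mul]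
  · rw [STM.add_comm, STM.add_comm (α x)]
    exact hα.map_add_of_slt hinj h

end IsTransmission

/-- If a surjective transmission `α : U → V` is injective on `(eU) \\ {0}` and `U` is a
semiring, then `V` is a semiring. -/
theorem semiring_of_surjective_transmission {U : Type u} {V : Type v}
    [STM U] [STM V] (α : U → V) (hα : IsTransmission α)
    (hsurj : Function.Surjective α)
    (hinj : ∀ x y : U, Ghost x → Ghost y → x ≠ 0 → y ≠ 0 → α x = α y → x = y)
    (hU : IsSemiring U) :
    IsSemiring V :=
  hU.of_surjective α hsurj hα.map_mul (hα.map_add hinj)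
end

section
/- Let U be a supertropical monoid and 𝔞 an ideal of U (a nonempty subset with U·𝔞 ⊆ 𝔞). The saturum of 𝔞, defined as sat(𝔞) = {x ∈ U : ex ≤ ea for some a ∈ 𝔞}, is again an ideal of U, and the relation E(𝔞) defined by x ~ y iff (x = y or both x, y ∈ sat(𝔞)) is a TE-relation on U. -/
universe u v w

open STM

/-- TE-relation on a supertropical monoid. -/
structure IsTE {U : Type u} [STM U] (E : U → U → Prop) : Prop where
  refl : ∀ x : U, E x x
  symm : ∀ x y : U, E x y → E y x
  trans : ∀ x y z : U, E x y → E y z → E x z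
  mul_compat : ∀ x y z : U, E x y → E (x * z) (y * z)
  order_compat : ∀ x1 x2 x3 x4 : U, Ghost x1 → Ghost x2 → Ghost x3 → Ghost x4 →
    STM.le x1 x2 → STM.le x3 x4 → E x1 x4 → E x2 x3 → E x1 x2
  ghost_zero : ∀ x : U, E (STM.e * x) 0 → E x 0

/-!
The saturum is an ideal and is downward closed for the ghost order `ex ≤ ey`. Collapsing any
such set `S` to a point gives a TE-relation: multiplicativity is the ideal property, order
compatibility and `ex ~ 0 ⇒ x ~ 0` come from downward closure (note `e(ex) = ex`), and the only
case not involving `S` is antisymmetry of the order on `eU`.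
-/

namespace STM

variable {U : Type u} [STM U]

theorem e_mul_e_mul (x : U) : e * (e * x) = e * x := by
  rw [← mul_assoc, e_idem]

def saturum (a : Set U) : Set U := {x | ∃ b ∈ a, le (e * x) (e * b)}

theorem mem_saturum_of_le {a : Set U} {x y : U} (hxy : le (e * x) (e * y))
    (hy : y ∈ saturum a) : x ∈ saturum a := by
  obtain ⟨b, hb, hyb⟩ := hy
  exact ⟨b, hb, le_trans _ _ _ hxy hyb⟩

theorem mul_mem_saturum {a : Set U} (hideal : ∀ x ∈ a, ∀ y : U, y * x ∈ a) {x : U}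
    (hx : x ∈ saturum a) (y : U) : y * x ∈ saturum a := by
  obtain ⟨b, hb, hxb⟩ := hx
  refine ⟨y * b, hideal b hb y, ?_⟩
  simpa only [mul_comm y, mul_assoc] using mul_le_mul _ _ y hxb

def collapseRel (S : Set U) (x y : U) : Prop := x = y ∨ (x ∈ S ∧ y ∈ S)

theorem isTE_collapseRel {S : Set U}
    (hmul : ∀ x ∈ S, ∀ y : U, y * x ∈ S)
    (hdown : ∀ x y : U, le (e * x) (e * y) → y ∈ S → x ∈ S) :
    IsTE (collapseRel S) where
  refl _ := Or.inl rfl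
  symm := by
    rintro x y (rfl | ⟨hx, hy⟩)
    exacts [Or.inl rfl, Or.inr ⟨hy, hx⟩]
  trans := by
    rintro x y z (rfl | ⟨hx, hy⟩) (rfl | ⟨hy', hz⟩)
    exacts [Or.inl rfl, Or.inr ⟨hy', hz⟩, Or.inr ⟨hx, hy⟩, Or.inr ⟨hx, hz⟩]
  mul_compat := by
    rintro x y z (rfl | ⟨hx, hy⟩)
    · exact Or.inl rfl
    · rw [mul_comm x, mul_comm y]
      exact Or.inr ⟨hmul x hx z, hmul y hy z⟩
  order_compat := by
    rintro x1 x2 x3 x4 g1 g2 - - h12 h34 (rfl | ⟨h1, h4⟩) (rfl | ⟨h2, h3⟩)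
    · exact Or.inl (le_antisymm _ _ g1 g2 h12 h34)
    · exact Or.inr ⟨hdown x1 x2 ((le_e x1 x2).mp h12) h2, h2⟩
    · exact Or.inr ⟨h1, hdown x2 x4 ((le_e x2 x4).mp h34) h4⟩
    · exact Or.inr ⟨h1, h2⟩
  ghost_zero := by
    rintro x (h | ⟨hex, h0⟩)
    · exact Or.inl (STM.ghost_zero x h)
    · exact Or.inr ⟨hdown x (e * x) (by rw [e_mul_e_mul]; exact le_refl _) hex, h0⟩

end STM

theorem saturum_ideal_and_TE_general {U : Type u} [STM U] (a : Set U)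
    (hideal : ∀ x ∈ a, ∀ y : U, y * x ∈ a) :
    (∀ x : U, (∃ b ∈ a, STM.le (STM.e * x) (STM.e * b)) →
      ∀ y : U, (∃ b ∈ a, STM.le (STM.e * (y * x)) (STM.e * b))) ∧
    IsTE (fun x y : U =>
      x = y ∨ ((∃ b ∈ a, STM.le (STM.e * x) (STM.e * b)) ∧
               (∃ b ∈ a, STM.le (STM.e * y) (STM.e * b)))) :=
  ⟨fun _ => mul_mem_saturum hideal,
    isTE_collapseRel (fun _ => mul_mem_saturum hideal) fun _ _ => mem_saturum_of_le⟩

/-- The saturum of an ideal `𝔞` of a supertropical monoid is again an ideal, and the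
relation `E(𝔞)` (identifying all elements of the saturum) is a TE-relation. -/
theorem saturum_ideal_and_TE {U : Type u} [STM U] (a : Set U) (hne : a.Nonempty)
    (hideal : ∀ x ∈ a, ∀ y : U, y * x ∈ a) :
    (∀ x : U, (∃ b ∈ a, STM.le (STM.e * x) (STM.e * b)) →
      ∀ y : U, (∃ b ∈ a, STM.le (STM.e * (y * x)) (STM.e * b))) ∧
    IsTE (fun x y : U =>
      x = y ∨ ((∃ b ∈ a, STM.le (STM.e * x) (STM.e * b)) ∧
               (∃ b ∈ a, STM.le (STM.e * y) (STM.e * b)))) :=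
  saturum_ideal_and_TE_general a hideal
end
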